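/- arXiv:2005.00301 — 2 statements merged into one kernel-verified Lean document; each statement's English description precedes it below -/
import Mathlib

section
/- Over the binary alphabet {0,1}, for every c ≥ 1, a word w of length c makes the triple (1, 00, w) fail to be a uniquely decodable code if and only if w = 0^c or w is a concatenation of blocks each equal to 1 or 00 (i.e., w lies in the submonoid generated by the words 1 and 00). -/
/-- A sequence of code-words `C : Fin m → List X` is a uniquely decodable code if
every word over `X` has at most one factorization into the code-words
(factorizations being compared as sequences of indices). -/
def IsUDCode {X : Type*} {m : ℕ} (C : Fin m → List X) : Prop :=
  ∀ l₁ l₂ : List (Fin m), (l₁.map C).flatten = (l₂.map C).flatten → l₁ = l₂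

/-- A sequence of code-words is a prefix code if `C i` is a prefix of `C j`
only when `i = j`. -/
def IsPrefixCode {X : Type*} {m : ℕ} (C : Fin m → List X) : Prop :=
  ∀ i j : Fin m, C i <+: C j → i = j

/-!
Parse words greedily into the blocks `1` and `00`: the parse either succeeds, or leaves a single
trailing `0`, or gets stuck in front of a factor `01` after reading some `d` letters.
If `w` gets stuck after `d` letters, `{1, 00, w}` is uniquely decodable: in a double
factorization every dangling suffix gets stuck after fewer than `d` letters (peeling off `1` or
`00` preserves this), and since getting stuck is inherited by extensions, such a suffix can
neither be a prefix of `w` nor have `w` as a prefix. If instead the parse of `w` leaves a trailing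
`0` and `w` contains a `1`, then the reversed word gets stuck, and reversing all code words
preserves unique decodability.
-/

inductive BlockWord : List Bool → Prop
  | nil : BlockWord []
  | one {u : List Bool} : BlockWord u → BlockWord (true :: u)
  | zeroZero {u : List Bool} : BlockWord u → BlockWord (false :: false :: u)

/-- `StuckAt u d`: the greedy parse of `u` into the blocks `1` and `00` reads `d` letters and then
meets the factor `01`. -/
inductive StuckAt : List Bool → ℕ → Prop
  | here (u : List Bool) : StuckAt (false :: true :: u) 0
  | one {u : List Bool} {d : ℕ} : StuckAt u d → StuckAt (true :: u) (d + 1)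
  | zeroZero {u : List Bool} {d : ℕ} : StuckAt u d → StuckAt (false :: false :: u) (d + 2)

namespace BlockWord

theorem append {u v : List Bool} (hu : BlockWord u) (hv : BlockWord v) : BlockWord (u ++ v) := by
  induction hu with
  | nil => exact hv
  | one _ ih => exact ih.one
  | zeroZero _ ih => exact ih.zeroZero

theorem reverse {u : List Bool} (hu : BlockWord u) : BlockWord u.reverse := by
  induction hu with
  | nil => exact nil
  | one _ ih => simpa using ih.append nil.one
  | zeroZero _ ih => simpa using ih.append nil.zeroZero

theorem replicate_false {n : ℕ} (hn : Even n) : BlockWord (List.replicate n false) := by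
  obtain ⟨k, rfl⟩ := hn
  induction k with
  | zero => exact nil
  | succ k ih =>
    rw [show k + 1 + (k + 1) = k + k + 1 + 1 by ring]
    exact ih.zeroZero

theorem iff_exists_blocks {u : List Bool} :
    BlockWord u ↔
      ∃ bs : List (List Bool), (∀ b ∈ bs, b = [true] ∨ b = [false, false]) ∧
        bs.flatten = u := by
  constructor
  · intro hu
    induction hu with
    | nil => exact ⟨[], by simp, rfl⟩
    | one _ ih =>
      obtain ⟨bs, hbs, rfl⟩ := ih
      exact ⟨[true] :: bs, by simpa using hbs, rfl⟩
    | zeroZero _ ih =>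
      obtain ⟨bs, hbs, rfl⟩ := ih
      exact ⟨[false, false] :: bs, by simpa using hbs, rfl⟩
  · rintro ⟨bs, hbs, rfl⟩
    induction bs with
    | nil => exact nil
    | cons b bs ih =>
      simp only [List.mem_cons, forall_eq_or_imp] at hbs
      rcases hbs with ⟨rfl | rfl, hbs⟩
      exacts [(ih hbs).one, (ih hbs).zeroZero]

theorem exists_stuckAt_false_cons {u : List Bool} (hu : BlockWord u) (h : true ∈ u) :
    ∃ d, StuckAt (false :: u) d := by
  induction hu with
  | nil => simp at h
  | @one u _ => exact ⟨0, .here u⟩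
  | zeroZero _ ih =>
    obtain ⟨d, hd⟩ := ih (by simpa using h)
    exact ⟨d + 2, hd.zeroZero⟩

theorem exists_flatten_eq {u : List Bool} (hu : BlockWord u) (w : List Bool) :
    ∃ l : List (Fin 3), 2 ∉ l ∧ (l.map ![[true], [false, false], w]).flatten = u := by
  induction hu with
  | nil => exact ⟨[], by simp, rfl⟩
  | one _ ih =>
    obtain ⟨l, hl, rfl⟩ := ih
    exact ⟨0 :: l, by simpa using hl, rfl⟩
  | zeroZero _ ih =>
    obtain ⟨l, hl, rfl⟩ := ih
    exact ⟨1 :: l, by simpa using hl, rfl⟩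

end BlockWord

theorem blockWord_or_append_false_or_stuckAt :
    ∀ u : List Bool,
      BlockWord u ∨ (∃ v, BlockWord v ∧ u = v ++ [false]) ∨ ∃ d, StuckAt u d
  | [] => .inl .nil
  | [false] => .inr (.inl ⟨[], .nil, rfl⟩)
  | false :: true :: u => .inr (.inr ⟨0, .here u⟩)
  | true :: u => by
    rcases blockWord_or_append_false_or_stuckAt u with h | ⟨v, hv, rfl⟩ | ⟨d, hd⟩
    exacts [.inl h.one, .inr (.inl ⟨true :: v, hv.one, rfl⟩), .inr (.inr ⟨d + 1, hd.one⟩)]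
  | false :: false :: u => by
    rcases blockWord_or_append_false_or_stuckAt u with h | ⟨v, hv, rfl⟩ | ⟨d, hd⟩
    exacts [.inl h.zeroZero, .inr (.inl ⟨false :: false :: v, hv.zeroZero, rfl⟩),
      .inr (.inr ⟨d + 2, hd.zeroZero⟩)]

namespace StuckAt

theorem append {u : List Bool} {d : ℕ} (h : StuckAt u d) (v : List Bool) :
    StuckAt (u ++ v) d := by
  induction h with
  | here u => exact here _
  | one _ ih => exact ih.one
  | zeroZero _ ih => exact ih.zeroZero

theorem unique {u : List Bool} {d d' : ℕ} (h : StuckAt u d) (h' : StuckAt u d') : d = d' := by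
  induction h generalizing d' with
  | here => cases h'; rfl
  | one _ ih => cases h' with | one h' => rw [ih h']
  | zeroZero _ ih => cases h' with | zeroZero h' => rw [ih h']

theorem ne_nil {u : List Bool} {d : ℕ} (h : StuckAt u d) : u ≠ [] := by
  cases h <;> simp

end StuckAt

section StuckCode

variable {w : List Bool} {dw : ℕ}

theorem flatten_ne_stuckAt_append (hw : StuckAt w dw) (a b : List (Fin 3)) {s : List Bool}
    {d : ℕ} (hs : StuckAt s d) (hd : d < dw) :
    (a.map ![[true], [false, false], w]).flatten ≠
      s ++ (b.map ![[true], [false, false], w]).flatten := by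
  intro h
  induction a generalizing s d with
  | nil => exact hs.ne_nil (List.append_eq_nil_iff.1 h.symm).1
  | cons i a ih =>
    fin_cases i
    · cases hs with
      | here => simp at h
      | one hs => exact ih hs (by omega) (by simpa using h)
      | zeroZero => simp at h
    · cases hs with
      | here => simp at h
      | one => simp at h
      | zeroZero hs => exact ih hs (by omega) (by simpa using h)
    · rcases List.append_eq_append_iff.1 h with ⟨t, rfl, -⟩ | ⟨t, rfl, -⟩
      · exact hd.ne' ((hw.append t).unique hs)
      · exact hd.ne ((hs.append t).unique hw)

theorem flatten_cons_ne_flatten_two_cons (hw : StuckAt w dw) {i : Fin 3} (hi : i ≠ 2)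
    (a b : List (Fin 3)) :
    ((i :: a).map ![[true], [false, false], w]).flatten ≠
      ((2 :: b).map ![[true], [false, false], w]).flatten := by
  intro h
  fin_cases i
  · cases hw with
    | here => simp at h
    | one hs => exact flatten_ne_stuckAt_append hs.one a b hs (by omega) (by simpa using h)
    | zeroZero => simp at h
  · cases hw with
    | here => simp at h
    | one => simp at h
    | zeroZero hs =>
      exact flatten_ne_stuckAt_append hs.zeroZero a b hs (by omega) (by simpa using h)
  · exact hi rfl

theorem flatten_cons_ne_flatten_cons (hw : StuckAt w dw) {i j : Fin 3} (hij : i ≠ j)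
    (a b : List (Fin 3)) :
    ((i :: a).map ![[true], [false, false], w]).flatten ≠
      ((j :: b).map ![[true], [false, false], w]).flatten := by
  intro h
  fin_cases i <;> fin_cases j
  all_goals first
    | exact hij rfl
    | exact flatten_cons_ne_flatten_two_cons hw (by decide) _ _ h
    | exact flatten_cons_ne_flatten_two_cons hw (by decide) _ _ h.symm
    | simp at h

theorem isUDCode_of_stuckAt (hw : StuckAt w dw) : IsUDCode ![[true], [false, false], w] := by
  have hC : ∀ i, ![[true], [false, false], w] i ≠ [] := by
    intro i; fin_cases i <;> simp [hw.ne_nil]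
  intro l₁ l₂ h
  induction l₁ generalizing l₂ with
  | nil =>
    cases l₂ with
    | nil => rfl
    | cons j l₂ => simp [hC] at h
  | cons i l₁ ih =>
    cases l₂ with
    | nil => simp [hC] at h
    | cons j l₂ =>
      obtain rfl | hij := eq_or_ne i j
      · rw [ih l₂ (List.append_cancel_left h)]
      · exact absurd h (flatten_cons_ne_flatten_cons hw hij l₁ l₂)

end StuckCode

theorem IsUDCode.of_reverse {X : Type*} {m : ℕ} {C : Fin m → List X}
    (h : IsUDCode fun i => (C i).reverse) : IsUDCode C := by
  intro l₁ l₂ hl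
  have hrev : ∀ l : List (Fin m), (l.reverse.map fun i => (C i).reverse).flatten =
      (l.map C).flatten.reverse := by
    intro l
    simp [List.map_reverse, List.flatten_reverse, Function.comp_def]
  exact List.reverse_injective (h _ _ (by rw [hrev, hrev, hl]))

theorem isUDCode_of_not_blockWord {w : List Bool} (hw : ¬ BlockWord w)
    (hz : w ≠ List.replicate w.length false) : IsUDCode ![[true], [false, false], w] := by
  rcases blockWord_or_append_false_or_stuckAt w with hb | ⟨v, hv, rfl⟩ | ⟨d, hd⟩
  · exact absurd hb hw
  · by_cases htrue : true ∈ v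
    · obtain ⟨d, hd⟩ := hv.reverse.exists_stuckAt_false_cons (List.mem_reverse.2 htrue)
      refine IsUDCode.of_reverse ?_
      convert isUDCode_of_stuckAt (w := (v ++ [false]).reverse) (by simpa using hd) using 1
      funext i
      fin_cases i <;> rfl
    · refine absurd (List.eq_replicate_iff.2 ⟨rfl, fun b hb => ?_⟩) hz
      rcases List.mem_append.1 hb with hb | hb
      · exact Bool.eq_false_iff.2 fun h => htrue (h ▸ hb)
      · exact List.mem_singleton.1 hb
  · exact isUDCode_of_stuckAt hd

theorem not_isUDCode_of_blockWord {w : List Bool} {l : List (Fin 3)} (hl : 2 ∈ l)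
    (h : BlockWord (l.map ![[true], [false, false], w]).flatten) :
    ¬ IsUDCode ![[true], [false, false], w] := by
  obtain ⟨l', hl', heq⟩ := h.exists_flatten_eq w
  intro hud
  exact hl' (hud _ _ heq ▸ hl)

theorem not_ud_one_doublezero_iff_general (c : ℕ) (w : List Bool) (hw : w.length = c) :
    ¬ IsUDCode ![[true], [false, false], w] ↔
      w = List.replicate c false ∨
        ∃ bs : List (List Bool), (∀ b ∈ bs, b = [true] ∨ b = [false, false]) ∧
          bs.flatten = w := by
  rw [← BlockWord.iff_exists_blocks]
  constructor
  · intro hnud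
    by_contra! h
    exact hnud (isUDCode_of_not_blockWord h.2 (hw ▸ h.1))
  · rintro (rfl | hb)
    · refine not_isUDCode_of_blockWord (l := [2, 2]) (by simp) ?_
      simpa using BlockWord.replicate_false (Even.add_self c)
    · exact not_isUDCode_of_blockWord (l := [2]) (by simp) (by simpa using hb)

theorem not_ud_one_doublezero_iff (c : ℕ) (hc : 1 ≤ c) (w : List Bool) (hw : w.length = c) :
    ¬ IsUDCode ![[true], [false, false], w] ↔
      w = List.replicate c false ∨
        ∃ bs : List (List Bool), (∀ b ∈ bs, b = [true] ∨ b = [false, false]) ∧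
          bs.flatten = w :=
  not_ud_one_doublezero_iff_general c w hw
end

section
/- Over the binary alphabet {0,1}, for every c ≥ 1, the number of words w of length c such that (1, 00, w) is not a uniquely decodable code equals F_{c+1} + (c mod 2), where F_n is the n-th Fibonacci number with F_1 = F_2 = 1. -/
/-!
If `w ∈ {1, 00}*` or `w = 0ⁿ`, the code `(1, 00, w)` is visibly not uniquely decodable. Otherwise
the greedy factorization of `w` over the prefix code `{1, 00}` gets stuck at a factor `01`, possibly
only after reversing all words (when `w` ends in an odd run of `0`s). In that case the place where
the greedy factorization of a message gets stuck tells whether the message starts with `w`: after a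
nonempty prefix in `{1, 00}*` it gets stuck strictly later. So the first code word, and by induction
the whole factorization, is determined by the message. Finally, `{1, 00}*` has `F_{c+1}` words of
length `c`, and `0^c` is one of them exactly when `c` is even.
-/

open List

namespace IsUDCode

variable {X : Type*} {m : ℕ}

theorem of_head_eq {C : Fin m → List X} (hC : ∀ i, C i ≠ [])
    (h : ∀ i j (l₁ l₂ : List (Fin m)),
      C i ++ (l₁.map C).flatten = C j ++ (l₂.map C).flatten → i = j) :
    IsUDCode C := by
  intro l₁
  induction l₁ with
  | nil =>
    rintro (_ | ⟨j, l₂⟩) heq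
    · rfl
    · simp [hC] at heq
  | cons i l₁ ih =>
    rintro (_ | ⟨j, l₂⟩) heq
    · simp [hC] at heq
    · simp only [map_cons, flatten_cons] at heq
      obtain rfl := h i j l₁ l₂ heq
      rw [ih l₂ (append_cancel_left heq)]

theorem reverse_iff {C : Fin m → List X} :
    IsUDCode (fun i => (C i).reverse) ↔ IsUDCode C := by
  suffices ∀ C : Fin m → List X, IsUDCode C → IsUDCode (fun i => (C i).reverse) by
    refine ⟨fun h => ?_, this C⟩
    simpa using this _ h
  intro C h l₁ l₂ heq
  have := congrArg reverse heq
  simp only [reverse_flatten, map_map, Function.comp_def, reverse_reverse, ← map_reverse] at this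
  simpa using h _ _ this

end IsUDCode

/-- The language `{1, 00}*`, i.e. the words all of whose maximal runs of `0`s have even length. -/
inductive Tiled : List Bool → Prop
  | nil : Tiled []
  | one {t : List Bool} : Tiled t → Tiled (true :: t)
  | two {t : List Bool} : Tiled t → Tiled (false :: false :: t)

namespace Tiled

theorem append {s t : List Bool} (hs : Tiled s) (ht : Tiled t) : Tiled (s ++ t) := by
  induction hs with
  | nil => exact ht
  | one _ ih => exact one ih
  | two _ ih => exact two ih

theorem reverse {s : List Bool} (hs : Tiled s) : Tiled s.reverse := by
  induction hs with
  | nil => exact nil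
  | one _ ih => simpa using ih.append (one nil)
  | two _ ih => simpa using ih.append (two nil)

theorem replicate_false_iff {n : ℕ} : Tiled (replicate n false) ↔ Even n := by
  induction n using Nat.twoStepInduction with
  | zero => simp [nil]
  | one => exact ⟨fun h => (by cases h), fun h => absurd h Nat.not_even_one⟩
  | more n ih _ =>
    rw [replicate_succ, replicate_succ, Nat.even_add_one, Nat.even_add_one, not_not, ← ih]
    exact ⟨fun h => by cases h; assumption, two⟩

theorem append_false_true_inj {p p' u u' : List Bool} (hp : Tiled p) (hp' : Tiled p')
    (h : p ++ false :: true :: u = p' ++ false :: true :: u') : p = p' := by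
  induction hp generalizing p' with
  | nil => cases hp' <;> simp_all
  | one _ ih => cases hp' with
    | one hp' => simpa using ih hp' (by simpa using h)
    | _ => simp at h
  | two _ ih => cases hp' with
    | two hp' => simpa using ih hp' (by simpa using h)
    | _ => simp at h

theorem not_append_false_true {p u : List Bool} (hp : Tiled p) :
    ¬ Tiled (p ++ false :: true :: u) := by
  induction hp with
  | nil => rintro (_ | _ | ⟨⟨⟩⟩)
  | one _ ih => rintro (_ | h); exact ih h
  | two _ ih => rintro (_ | _ | h); exact ih h

end Tiled

/-- The greedy factorization of `w` over the prefix code `{1, 00}` gets stuck at a factor `01`. -/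
def Blocked (w : List Bool) : Prop :=
  ∃ q r, Tiled q ∧ w = q ++ false :: true :: r

theorem Tiled.append_flatten_ne {q r s t : List Bool} (hq : Tiled q) (hs : Tiled s) (hs₀ : s ≠ [])
    (l : List (Fin 3)) :
    s ++ (l.map ![[true], [false, false], q ++ false :: true :: r]).flatten
      ≠ q ++ false :: true :: t := by
  induction l generalizing s with
  | nil => simpa using fun h => hq.not_append_false_true (h ▸ hs)
  | cons i l ih =>
    fin_cases i
    · simpa using ih (hs.append (.one .nil)) (by simp)
    · simpa using ih (hs.append (.two .nil)) (by simp)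
    · intro h
      have := hs.append hq |>.append_false_true_inj hq (u := r ++ _) (u' := t) (by simpa using h)
      exact hs₀ (by simpa using this)

theorem Blocked.isUDCode {w : List Bool} (hw : Blocked w) :
    IsUDCode ![[true], [false, false], w] := by
  obtain ⟨q, r, hq, rfl⟩ := hw
  refine IsUDCode.of_head_eq (fun i => by fin_cases i <;> simp) fun i j l₁ l₂ h => ?_
  fin_cases i <;> fin_cases j
  · rfl
  · simp at h
  · exact (hq.append_flatten_ne (.one .nil) (by simp) l₁ (by simpa using h)).elim
  · simp at h
  · rfl
  · exact (hq.append_flatten_ne (.two .nil) (by simp) l₁ (by simpa using h)).elim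
  · exact (hq.append_flatten_ne (.one .nil) (by simp) l₂ (by simpa using h.symm)).elim
  · exact (hq.append_flatten_ne (.two .nil) (by simp) l₂ (by simpa using h.symm)).elim
  · rfl

theorem Tiled.eq_replicate_or_blocked_false_cons {p : List Bool} (hp : Tiled p) :
    (∃ n, p = replicate n false) ∨ Blocked (false :: p) := by
  induction hp with
  | nil => exact .inl ⟨0, rfl⟩
  | @one t _ => exact .inr ⟨[], t, .nil, rfl⟩
  | two _ ih =>
    rcases ih with ⟨n, rfl⟩ | ⟨q, r, hq, hqr⟩
    · exact .inl ⟨n + 2, rfl⟩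
    · exact .inr ⟨false :: false :: q, r, hq.two, by simp [hqr]⟩

theorem tiled_or_eq_tiled_append_false_or_blocked :
    ∀ w : List Bool, Tiled w ∨ (∃ p, Tiled p ∧ w = p ++ [false]) ∨ Blocked w
  | [] => .inl .nil
  | [false] => .inr (.inl ⟨[], .nil, rfl⟩)
  | false :: true :: r => .inr (.inr ⟨[], r, .nil, rfl⟩)
  | true :: w => by
    rcases tiled_or_eq_tiled_append_false_or_blocked w with hw | ⟨p, hp, rfl⟩ | ⟨q, r, hq, rfl⟩
    · exact .inl hw.one
    · exact .inr (.inl ⟨true :: p, hp.one, rfl⟩)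
    · exact .inr (.inr ⟨true :: q, r, hq.one, rfl⟩)
  | false :: false :: w => by
    rcases tiled_or_eq_tiled_append_false_or_blocked w with hw | ⟨p, hp, rfl⟩ | ⟨q, r, hq, rfl⟩
    · exact .inl hw.two
    · exact .inr (.inl ⟨false :: false :: p, hp.two, rfl⟩)
    · exact .inr (.inr ⟨false :: false :: q, r, hq.two, rfl⟩)

theorem Tiled.exists_flatten_eq {w : List Bool} (hw : Tiled w) (v : List Bool) :
    ∃ l : List (Fin 3), 2 ∉ l ∧ (l.map ![[true], [false, false], v]).flatten = w := by
  induction hw with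
  | nil => exact ⟨[], by simp⟩
  | one _ ih =>
    obtain ⟨l, hl, hlw⟩ := ih
    exact ⟨0 :: l, by simp [hl], by simp [hlw]⟩
  | two _ ih =>
    obtain ⟨l, hl, hlw⟩ := ih
    exact ⟨1 :: l, by simp [hl], by simp [hlw]⟩

theorem Tiled.not_isUDCode {w : List Bool} (hw : Tiled w) :
    ¬ IsUDCode ![[true], [false, false], w] := by
  obtain ⟨l, hl, hlw⟩ := hw.exists_flatten_eq w
  exact fun h => hl (h l [2] (by simpa using hlw) ▸ mem_singleton_self 2)

theorem not_isUDCode_replicate_false (n : ℕ) :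
    ¬ IsUDCode ![[true], [false, false], replicate n false] := by
  intro h
  have := h (replicate n 1) [2, 2] (by simp [eq_replicate_iff, mul_two])
  simpa using congrArg (2 ∈ ·) this

theorem not_isUDCode_iff {w : List Bool} :
    ¬ IsUDCode ![[true], [false, false], w] ↔ Tiled w ∨ ∃ n, w = replicate n false := by
  refine ⟨fun h => ?_, ?_⟩
  · rcases tiled_or_eq_tiled_append_false_or_blocked w with hw | ⟨p, hp, rfl⟩ | hw
    · exact .inl hw
    · rcases hp.reverse.eq_replicate_or_blocked_false_cons with ⟨n, hn⟩ | hblocked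
      · exact .inr ⟨n + 1, by simpa [replicate_succ'] using congrArg reverse hn⟩
      · have hcode : ![[true], [false, false], (p ++ [false]).reverse]
            = fun i => (![[true], [false, false], p ++ [false]] i).reverse := by
          funext i; fin_cases i <;> rfl
        refine absurd (IsUDCode.reverse_iff.mp ?_) h
        rw [← hcode]
        simpa using hblocked.isUDCode
    · exact absurd hw.isUDCode h
  · rintro (hw | ⟨n, rfl⟩)
    · exact hw.not_isUDCode
    · exact not_isUDCode_replicate_false n

theorem finite_setOf_length_eq_tiled (c : ℕ) : {w : List Bool | w.length = c ∧ Tiled w}.Finite :=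
  (finite_length_eq Bool c).subset fun _ hw => hw.1

theorem setOf_length_eq_tiled_add_two (c : ℕ) :
    {w : List Bool | w.length = c + 2 ∧ Tiled w}
      = cons true '' {w | w.length = c + 1 ∧ Tiled w}
        ∪ (fun w => false :: false :: w) '' {w | w.length = c ∧ Tiled w} := by
  ext w
  constructor
  · rintro ⟨hlen, _ | @⟨w, hw⟩ | @⟨w, hw⟩⟩
    · simp at hlen
    · exact .inl ⟨w, ⟨by simpa using hlen, hw⟩, rfl⟩
    · exact .inr ⟨w, ⟨by simpa using hlen, hw⟩, rfl⟩
  · rintro (⟨w, ⟨hlen, hw⟩, rfl⟩ | ⟨w, ⟨hlen, hw⟩, rfl⟩)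
    · exact ⟨by simp [hlen], hw.one⟩
    · exact ⟨by simp [hlen], hw.two⟩

theorem ncard_setOf_length_eq_tiled :
    ∀ c, {w : List Bool | w.length = c ∧ Tiled w}.ncard = Nat.fib (c + 1)
  | 0 => by
    rw [show {w : List Bool | w.length = 0 ∧ Tiled w} = {[]} by
      ext w; simpa using fun h => h ▸ Tiled.nil]
    simp
  | 1 => by
    rw [show {w : List Bool | w.length = 1 ∧ Tiled w} = {[true]} by
      ext w
      constructor
      · rintro ⟨hlen, _ | @⟨w, hw⟩ | _⟩ <;> simp_all
      · rintro rfl; exact ⟨rfl, Tiled.nil.one⟩]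
    simp
  | c + 2 => by
    have hdisj : Disjoint (cons true '' {w : List Bool | w.length = c + 1 ∧ Tiled w})
        ((fun w => false :: false :: w) '' {w | w.length = c ∧ Tiled w}) :=
      Set.disjoint_left.mpr fun _ ⟨_, _, h⟩ ⟨_, _, h'⟩ => by simp [← h] at h'
    rw [setOf_length_eq_tiled_add_two, Set.ncard_union_eq hdisj
      ((finite_setOf_length_eq_tiled _).image _) ((finite_setOf_length_eq_tiled _).image _),
      Set.ncard_image_of_injective _ (cons_injective), Set.ncard_image_of_injective _
      (fun _ _ h => by simpa using h), ncard_setOf_length_eq_tiled (c + 1),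
      ncard_setOf_length_eq_tiled c]
    exact (Nat.fib_add_two (n := c + 1)).trans (add_comm _ _) |>.symm

theorem count_not_ud_one_doublezero_general (c : ℕ) :
    Nat.card {w : List Bool // w.length = c ∧
        ¬ IsUDCode ![[true], [false, false], w]} = Nat.fib (c + 1) + c % 2 := by
  have hset : {w : List Bool | w.length = c ∧ ¬ IsUDCode ![[true], [false, false], w]}
      = insert (replicate c false) {w | w.length = c ∧ Tiled w} := by
    ext w
    simp only [Set.mem_ofPred_eq, Set.mem_insert_iff, not_isUDCode_iff]
    constructor
    · rintro ⟨rfl, hw | ⟨n, rfl⟩⟩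
      exacts [.inr ⟨rfl, hw⟩, .inl (by simp)]
    · rintro (rfl | ⟨rfl, hw⟩)
      exacts [⟨length_replicate, .inr ⟨c, rfl⟩⟩, ⟨rfl, .inl hw⟩]
  rw [← Set.coe_ofPred, Nat.card_coe_set_eq, hset]
  rcases Nat.even_or_odd c with hc | hc
  · rw [Set.insert_eq_of_mem (show replicate c false ∈ {w | w.length = c ∧ Tiled w} from
      ⟨length_replicate, Tiled.replicate_false_iff.mpr hc⟩),
      ncard_setOf_length_eq_tiled, Nat.even_iff.mp hc, add_zero]
  · rw [Set.ncard_insert_of_notMem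
      (fun h => Nat.not_even_iff_odd.mpr hc (Tiled.replicate_false_iff.mp h.2))
      (finite_setOf_length_eq_tiled c), ncard_setOf_length_eq_tiled, Nat.odd_iff.mp hc]

theorem count_not_ud_one_doublezero (c : ℕ) (hc : 1 ≤ c) :
    Nat.card {w : List Bool // w.length = c ∧
        ¬ IsUDCode ![[true], [false, false], w]} = Nat.fib (c + 1) + c % 2 :=
  count_not_ud_one_doublezero_general c
end
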